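/- If a candidate triangle (X, α) is contractible via a contraction compatible with α (i.e. there exist h_i : X_i → X_{i−1} with 1 = h_{i+1}d_{i+1} + d_i h_i and α_{i−1}(t h_i) = h_{i+3} α_i), then setting k_i = (−1)^i h_{i+3} α_i : tX_i → X_{i+2}, the identities d_{i+3}k_i − k_{i+1}(t d_{i+1}) = (−1)^i α_i hold for all i. -/

import Mathlib

open CategoryTheory

/-! Since `k (i+1)` carries the opposite sign to `k i`, moving `t d` across `α` by naturality
turns the left side into `(−1)^i α_i (h d + d h)`, and the contraction identity at `X (i+3)`
makes this `(−1)^i α_i`. -/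

namespace CategoryTheory.Preadditive

variable {A : Type*} [Category A] [Preadditive A]

theorem zsmul_comp_sub_comp_neg_zsmul_of_contraction {T T' Y Z W : A}
    (a : T ⟶ Y) (a' : T' ⟶ Z) (f : T ⟶ T') (dY : Y ⟶ Z) (comm : f ≫ a' = a ≫ dY)
    (hZ : Z ⟶ Y) (hY : Y ⟶ W) (dW : W ⟶ Y) (contr : 𝟙 Y = dY ≫ hZ + hY ≫ dW) (n : ℤ) :
    (n • (a ≫ hY)) ≫ dW - f ≫ ((-n) • (a' ≫ hZ)) = n • a := by
  have key : a ≫ hY ≫ dW + f ≫ a' ≫ hZ = a := by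
    rw [← Category.assoc f, comm, Category.assoc, ← comp_add, add_comm, ← contr,
      Category.comp_id]
  rw [zsmul_comp, comp_zsmul, neg_smul, sub_neg_eq_add, Category.assoc, ← smul_add, key]

end CategoryTheory.Preadditive

open CategoryTheory.Preadditive in
/-- If a candidate triangle `(X, α)` is contractible via a contraction `h`
compatible with `α` (i.e. `1 = h d + d h` and `α_{i−1} (t h_i) = h_{i+3} α_i`),
then setting `k_i = (−1)^i h_{i+3} α_i : t(X i) ⟶ X (i+2)`, the identities
`d_{i+3} k_i − k_{i+1} (t d_{i+1}) = (−1)^i α_i` hold for all `i`. -/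
theorem stmt4 {A : Type*} [Category A] [Preadditive A]
    (t : A ⥤ A)
    (X : ℤ → A) (d : ∀ i j : ℤ, i + 1 = j → (X i ⟶ X j))
    (α : ∀ i j : ℤ, i + 3 = j → (t.obj (X i) ≅ X j))
    (hnat : ∀ i : ℤ, t.map (d i (i+1) rfl) ≫ (α (i+1) (i+4) (by omega)).hom =
      (α i (i+3) rfl).hom ≫ d (i+3) (i+4) (by omega))
    (h : ∀ i j : ℤ, j + 1 = i → (X i ⟶ X j))
    (hcontr : ∀ n : ℤ, 𝟙 (X n) = d n (n+1) rfl ≫ h (n+1) n rfl +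
        h n (n-1) (by omega) ≫ d (n-1) n (by omega))
    (k : ∀ i j : ℤ, i + 2 = j → (t.obj (X i) ⟶ X j))
    (hk : ∀ i : ℤ, k i (i+2) rfl =
        ((Int.negOnePow i : ℤˣ) : ℤ) •
          ((α i (i+3) rfl).hom ≫ h (i+3) (i+2) (by omega))) :
    ∀ i : ℤ, k i (i+2) rfl ≫ d (i+2) (i+3) (by omega) -
        t.map (d i (i+1) rfl) ≫ k (i+1) (i+3) (by omega) =
        ((Int.negOnePow i : ℤˣ) : ℤ) • (α i (i+3) rfl).hom := by
  -- `hk` at `i + 1` mentions the indices `i + 1 + 2` and `i + 1 + 3`; restate it for any indices.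
  have hk' : ∀ i j l (hj : i + 2 = j) (hl : i + 3 = l),
      k i j hj = ((Int.negOnePow i : ℤˣ) : ℤ) • ((α i l hl).hom ≫ h l j (by omega)) := by
    rintro i _ _ rfl rfl
    exact hk i
  have hcontr' : ∀ n m p (hm : n + 1 = m) (hp : p + 1 = n),
      𝟙 (X n) = d n m hm ≫ h m n hm + h n p hp ≫ d p n hp := by
    rintro n _ p rfl hp
    obtain rfl : p = n - 1 := by omega
    exact hcontr n
  intro i
  rw [hk i, hk' (i+1) (i+3) (i+4) (by omega) (by omega), Int.negOnePow_succ, Units.val_neg]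
  exact zsmul_comp_sub_comp_neg_zsmul_of_contraction _ _ _ _ (hnat i) _ _ _
    (hcontr' (i+3) (i+4) (i+2) (by omega) (by omega)) _
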